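/- Let k be a commutative ring and E a bialgebra over k with multiplication μ and comultiplication δ, and let S : E → E be a k-linear endomorphism satisfying the von Neumann axiom μ ∘ (μ ⊗ id) ∘ (id ⊗ S ⊗ id) ∘ (id ⊗ δ) ∘ δ = id_E (i.e., ∑ x₍₁₎ S(x₍₂₎) x₍₃₎ = x for all x ∈ E). Define the fusion operator F = (μ ⊗ id) ∘ (id ⊗ δ) : E ⊗ E → E ⊗ E and the map F̄ = (μ ⊗ id) ∘ (id ⊗ S ⊗ id) ∘ (id ⊗ δ) : E ⊗ E → E ⊗ E, so F(x ⊗ y) = ∑ x·y₍₁₎ ⊗ y₍₂₎ and F̄(x ⊗ y) = ∑ x·S(y₍₁₎) ⊗ y₍₂₎. Then F̄ is a partial inverse of F in the sense that F ∘ F̄ ∘ F = F. -/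
import Mathlib

set_option synthInstance.maxHeartbeats 400000
set_option maxHeartbeats 1000000

open TensorProduct

/-- The fusion operator `F = (μ ⊗ id) ∘ (id ⊗ δ) : E ⊗ E → E ⊗ E`,
`F(x ⊗ y) = ∑ x·y₍₁₎ ⊗ y₍₂₎`, of a bialgebra `E` over `k`. -/
noncomputable def fusionOperator (k E : Type*) [CommRing k] [Ring E] [Bialgebra k E] :
    E ⊗[k] E →ₗ[k] E ⊗[k] E :=
  TensorProduct.map (LinearMap.mul' k E) LinearMap.id
    ∘ₗ (TensorProduct.assoc k E E E).symm.toLinearMap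
    ∘ₗ TensorProduct.map LinearMap.id (Coalgebra.comul (R := k) (A := E))

/-- The twisted fusion operator `F̄ = (μ ⊗ id) ∘ (id ⊗ S ⊗ id) ∘ (id ⊗ δ)`,
`F̄(x ⊗ y) = ∑ x·S(y₍₁₎) ⊗ y₍₂₎`, associated to a linear endomorphism `S` of a
bialgebra `E` over `k`. -/
noncomputable def fusionOperatorBar (k E : Type*) [CommRing k] [Ring E] [Bialgebra k E]
    (S : E →ₗ[k] E) : E ⊗[k] E →ₗ[k] E ⊗[k] E :=
  TensorProduct.map (LinearMap.mul' k E) LinearMap.id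
    ∘ₗ TensorProduct.map (TensorProduct.map LinearMap.id S) LinearMap.id
    ∘ₗ (TensorProduct.assoc k E E E).symm.toLinearMap
    ∘ₗ TensorProduct.map LinearMap.id (Coalgebra.comul (R := k) (A := E))

section aux

variable (k E : Type*) [CommRing k] [Ring E] [Bialgebra k E]

/-- `(f ∘ g) ⊗ id` applied, as iterated application. -/
lemma aux_rmap_comp_apply {M N P Q : Type*}
    [AddCommGroup M] [AddCommGroup N] [AddCommGroup P] [AddCommGroup Q]
    [Module k M] [Module k N] [Module k P] [Module k Q]
    (f : N →ₗ[k] P) (g : M →ₗ[k] N) (w : M ⊗[k] Q) :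
    TensorProduct.map (f ∘ₗ g) LinearMap.id w
      = TensorProduct.map f LinearMap.id (TensorProduct.map g LinearMap.id w) := by
  rw [← LinearMap.comp_apply, ← TensorProduct.map_comp, LinearMap.id_comp]

/-- naturality of the (inverse) associator in the first slot. -/
lemma aux_assoc_symm_nat (f : E →ₗ[k] E) (x : E) (w : E ⊗[k] E) :
    (TensorProduct.assoc k E E E).symm (f x ⊗ₜ[k] w)
      = TensorProduct.map (TensorProduct.map f LinearMap.id) LinearMap.id
          ((TensorProduct.assoc k E E E).symm (x ⊗ₜ[k] w)) := by
  induction w using TensorProduct.induction_on with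
  | zero => simp
  | tmul a b => simp
  | add u v hu hv => simp [tmul_add, hu, hv]

lemma aux_mul_assoc_symm (x : E) (w : E ⊗[k] E) :
    TensorProduct.map (LinearMap.mul' k E) LinearMap.id
        ((TensorProduct.assoc k E E E).symm (x ⊗ₜ[k] w))
      = TensorProduct.map (LinearMap.mulLeft k x) LinearMap.id w := by
  induction w using TensorProduct.induction_on with
  | zero => simp
  | tmul a b => simp [LinearMap.mul'_apply]
  | add u v hu hv => simp [tmul_add, hu, hv]

lemma fusionOperator_tmul (x y : E) :
    fusionOperator k E (x ⊗ₜ[k] y)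
      = TensorProduct.map (LinearMap.mulLeft k x) LinearMap.id
          (Coalgebra.comul (R := k) y) := by
  simp only [fusionOperator, LinearMap.comp_apply, map_tmul, LinearMap.id_apply,
    LinearEquiv.coe_coe]
  exact aux_mul_assoc_symm k E x _

lemma fusionOperatorBar_tmul (S : E →ₗ[k] E) (x y : E) :
    fusionOperatorBar k E S (x ⊗ₜ[k] y)
      = TensorProduct.map (LinearMap.mulLeft k x) LinearMap.id
          (TensorProduct.map S LinearMap.id (Coalgebra.comul (R := k) y)) := by
  simp only [fusionOperatorBar, LinearMap.comp_apply, map_tmul, LinearMap.id_apply,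
    LinearEquiv.coe_coe]
  induction (Coalgebra.comul (R := k) y) using TensorProduct.induction_on with
  | zero => simp
  | tmul a b => simp [LinearMap.mul'_apply]
  | add u v hu hv => simp [tmul_add, hu, hv]

/-- `F` commutes with `mulLeft x ⊗ id`. -/
lemma fusionOperator_map_mulLeft (x : E) (w : E ⊗[k] E) :
    fusionOperator k E (TensorProduct.map (LinearMap.mulLeft k x) LinearMap.id w)
      = TensorProduct.map (LinearMap.mulLeft k x) LinearMap.id (fusionOperator k E w) := by
  induction w using TensorProduct.induction_on with
  | zero => simp
  | tmul a b =>
      simp only [map_tmul, LinearMap.id_apply, LinearMap.mulLeft_apply,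
        fusionOperator_tmul]
      rw [LinearMap.mulLeft_mul, aux_rmap_comp_apply]
  | add u v hu hv => simp [hu, hv]

/-- `F̄` commutes with `mulLeft x ⊗ id`. -/
lemma fusionOperatorBar_map_mulLeft (S : E →ₗ[k] E) (x : E) (w : E ⊗[k] E) :
    fusionOperatorBar k E S (TensorProduct.map (LinearMap.mulLeft k x) LinearMap.id w)
      = TensorProduct.map (LinearMap.mulLeft k x) LinearMap.id
          (fusionOperatorBar k E S w) := by
  induction w using TensorProduct.induction_on with
  | zero => simp
  | tmul a b =>
      simp only [map_tmul, LinearMap.id_apply, LinearMap.mulLeft_apply,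
        fusionOperatorBar_tmul]
      rw [LinearMap.mulLeft_mul, aux_rmap_comp_apply]
  | add u v hu hv => simp [hu, hv]

/-- `F ∘ (f ⊗ id)` computed on an element. -/
lemma fusionOperator_map_rTensor (f : E →ₗ[k] E) (w : E ⊗[k] E) :
    fusionOperator k E (TensorProduct.map f LinearMap.id w)
      = TensorProduct.map ((LinearMap.mul' k E) ∘ₗ TensorProduct.map f LinearMap.id)
          LinearMap.id
          ((TensorProduct.assoc k E E E).symm
            (TensorProduct.map LinearMap.id (Coalgebra.comul (R := k) (A := E)) w)) := by
  induction w using TensorProduct.induction_on with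
  | zero => simp
  | tmul a b =>
      simp only [map_tmul, LinearMap.id_apply, fusionOperator, LinearMap.comp_apply,
        LinearEquiv.coe_coe]
      rw [aux_assoc_symm_nat k E f a (Coalgebra.comul b), aux_rmap_comp_apply]
  | add u v hu hv => simp [hu, hv]

end aux

/-- If `E` is a bialgebra over a commutative ring `k` and `S : E → E`
is a `k`-linear endomorphism satisfying the von Neumann axiom
`μ ∘ (μ ⊗ id) ∘ (id ⊗ S ⊗ id) ∘ (id ⊗ δ) ∘ δ = id` (i.e. `∑ x₍₁₎ S(x₍₂₎) x₍₃₎ = x`),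
then `F̄(x ⊗ y) = ∑ x·S(y₍₁₎) ⊗ y₍₂₎` is a partial inverse of the fusion operator
`F(x ⊗ y) = ∑ x·y₍₁₎ ⊗ y₍₂₎` : one has `F ∘ F̄ ∘ F = F`. -/
theorem fusionOperator_partial_inverse
    (k E : Type*) [CommRing k] [Ring E] [Bialgebra k E] (S : E →ₗ[k] E)
    (hVN : (LinearMap.mul' k E
      ∘ₗ TensorProduct.map (LinearMap.mul' k E) LinearMap.id
      ∘ₗ TensorProduct.map (TensorProduct.map LinearMap.id S) LinearMap.id
      ∘ₗ (TensorProduct.assoc k E E E).symm.toLinearMap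
      ∘ₗ TensorProduct.map LinearMap.id (Coalgebra.comul (R := k) (A := E))
      ∘ₗ (Coalgebra.comul (R := k) (A := E))) = LinearMap.id) :
    fusionOperator k E ∘ₗ fusionOperatorBar k E S ∘ₗ fusionOperator k E
      = fusionOperator k E := by
  -- the map `s' : y ↦ ∑ y₁ S(y₂)`
  set s' : E →ₗ[k] E :=
    (LinearMap.mul' k E) ∘ₗ TensorProduct.map LinearMap.id S
      ∘ₗ Coalgebra.comul (R := k) (A := E) with hs'
  -- coassociativity : `α⁻¹ ((id ⊗ Δ) (Δ y)) = (Δ ⊗ id) (Δ y)`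
  have coassoc' : ∀ y : E,
      (TensorProduct.assoc k E E E).symm
          (TensorProduct.map LinearMap.id (Coalgebra.comul (R := k) (A := E))
            (Coalgebra.comul (R := k) y))
        = TensorProduct.map (Coalgebra.comul (R := k) (A := E)) LinearMap.id
            (Coalgebra.comul (R := k) y) := by
    intro y
    have := Coalgebra.coassoc_symm_apply (R := k) (A := E) y
    simpa [LinearMap.lTensor, LinearMap.rTensor] using this
  -- Step A : `F̄ (Δ y) = (s' ⊗ id) (Δ y)`
  have stepA : ∀ y : E,
      fusionOperatorBar k E S (Coalgebra.comul (R := k) y)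
        = TensorProduct.map s' LinearMap.id (Coalgebra.comul (R := k) y) := by
    intro y
    simp only [fusionOperatorBar, LinearMap.comp_apply, LinearEquiv.coe_coe]
    rw [coassoc' y, hs', aux_rmap_comp_apply, aux_rmap_comp_apply]
  -- the von Neumann axiom in the form `∀ y, μ ((s' ⊗ id) (Δ y)) = y`
  have hVN' : ∀ y : E,
      LinearMap.mul' k E
        (TensorProduct.map s' LinearMap.id (Coalgebra.comul (R := k) y)) = y := by
    intro y
    have h := LinearMap.congr_fun hVN y
    simp only [LinearMap.comp_apply, LinearMap.id_apply, LinearEquiv.coe_coe] at h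
    rw [coassoc' y] at h
    rw [hs', aux_rmap_comp_apply, aux_rmap_comp_apply]
    exact h
  -- Step B : `F (F̄ (Δ y)) = Δ y`
  have stepB : ∀ y : E,
      fusionOperator k E (fusionOperatorBar k E S (Coalgebra.comul (R := k) y))
        = Coalgebra.comul (R := k) y := by
    intro y
    rw [stepA y, fusionOperator_map_rTensor k E s' (Coalgebra.comul y), coassoc' y,
      aux_rmap_comp_apply]
    have : ∀ w : E ⊗[k] E,
        TensorProduct.map (LinearMap.mul' k E ∘ₗ TensorProduct.map s' LinearMap.id)
          LinearMap.id (TensorProduct.map (Coalgebra.comul (R := k) (A := E))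
            LinearMap.id w) = w := by
      intro w
      induction w using TensorProduct.induction_on with
      | zero => simp
      | tmul a b =>
          simp only [map_tmul, LinearMap.id_apply, LinearMap.comp_apply]
          rw [hVN' a]
      | add u v hu hv => simp [hu, hv]
    rw [← aux_rmap_comp_apply k (LinearMap.mul' k E)
      (TensorProduct.map s' LinearMap.id)]
    exact this _
  -- conclude
  apply TensorProduct.ext'
  intro x y
  simp only [LinearMap.comp_apply]
  rw [fusionOperator_tmul, fusionOperatorBar_map_mulLeft, fusionOperator_map_mulLeft,
    stepB y]
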